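/- Let n, t, t_e, s, s_e be natural numbers with s ≤ t, s_e ≤ t_e, and n ≥ t + t_e + 1, and let c, c' ∈ {0,1}^n. If B_{t,t_e}(c) ∩ B_{t,t_e}(c') = ∅, then B_{s,s_e}(c) ∩ B_{s,s_e}(c') = ∅. Consequently, every t-breaks t_e-edit-errors resilient code of length n ≥ t + t_e + 1 can also be uniquely decoded over the channel that applies at most t_e edit errors followed by at most t breaks. -/

import Mathlib

/-- Cost structure for Levenshtein distance (formerly in Mathlib, removed since). -/
structure Levenshtein.Cost (α β δ : Type*) where
  delete : α → δ
  insert : β → δ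
  substitute : α → β → δ

/-- The default cost: unit cost for insertions, deletions and substitutions. -/
def Levenshtein.defaultCost {α : Type*} [DecidableEq α] : Levenshtein.Cost α α ℕ where
  delete _ := 1
  insert _ := 1
  substitute a b := if a = b then 0 else 1

/-- Auxiliary step of the Levenshtein computation (formerly Mathlib's `Levenshtein.impl`). -/
def Levenshtein.impl {α β δ : Type*} [AddZeroClass δ] [Min δ] (C : Levenshtein.Cost α β δ)
    (xs : List α) (y : β) (d : {r : List δ // 0 < r.length}) :
    {r : List δ // 0 < r.length} :=
  let ⟨ds, w⟩ := d
  xs.zip (ds.zip ds.tail) |>.foldr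
    (init := ⟨[ds.getLast (List.ne_nil_of_length_pos w) + C.insert y], by simp⟩)
    (fun ⟨x, d₀, d₁⟩ ⟨r, w⟩ =>
      ⟨min (C.delete x + r[0]) (min (C.insert y + d₀) (C.substitute x y + d₁)) :: r, by simp⟩)

/-- Levenshtein distances of all suffixes of `xs` to `ys` (formerly in Mathlib). -/
def suffixLevenshtein {α β δ : Type*} [AddZeroClass δ] [Min δ] (C : Levenshtein.Cost α β δ)
    (xs : List α) (ys : List β) : {r : List δ // 0 < r.length} :=
  ys.foldr
    (Levenshtein.impl C xs)
    (xs.foldr (init := ⟨[0], by simp⟩) (fun a ⟨r, w⟩ => ⟨(C.delete a + r[0]) :: r, by simp⟩))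

/-- The Levenshtein distance with cost `C` (formerly in Mathlib). -/
def levenshtein {α β δ : Type*} [AddZeroClass δ] [Min δ] (C : Levenshtein.Cost α β δ)
    (xs : List α) (ys : List β) : δ :=
  let ⟨r, w⟩ := suffixLevenshtein C xs ys
  r[0]

/-- The edit (Levenshtein) distance between two binary words. -/
def editDist (x y : List Bool) : ℕ :=
  levenshtein Levenshtein.defaultCost x y

/-- The `t`-breaks `te`-edit-errors channel output set of a binary word `w`. -/
def BreakEdit (t te : ℕ) (w : List Bool) : Set (Multiset (List Bool)) :=
  { S | Multiset.card S = t + 1 ∧ (∀ f ∈ S, f ≠ []) ∧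
      ∃ l : List (List Bool), (l : Multiset (List Bool)) = S ∧ editDist l.flatten w ≤ te }

/-!
An output of the `(s, se)` channel is also one of the `(s, te)` channel. A common output
`S` of `c` and `c'` with `k < t` breaks has total length at least `n - te > k + 1`, so some
fragment of `S` has length at least two; cutting it after its first letter yields a multiset
that is an output of the `(k + 1, te)` channel for every word that `S` was an output of.
Repeating this up to `t` breaks produces a common output of the `(t, te)` channel.
-/

section Levenshtein

variable {α β δ : Type*} [AddZeroClass δ] [Min δ] (C : Levenshtein.Cost α β δ)

theorem Levenshtein.impl_length (xs : List α) (y : β) (d : {r : List δ // 0 < r.length})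
    (w : d.1.length = xs.length + 1) :
    (Levenshtein.impl C xs y d).1.length = xs.length + 1 := by
  induction xs generalizing d with
  | nil => rfl
  | cons _ xs ih =>
    match d, w with
    | ⟨_ :: d₂ :: ds, _⟩, w =>
      have hlen := ih ⟨d₂ :: ds, by simp⟩ (by simpa using w)
      simp only [Levenshtein.impl, List.zip_cons_cons, List.tail_cons, List.foldr_cons,
        List.length_cons, List.getLast_cons_cons] at hlen ⊢
      omega

theorem Levenshtein.impl_nil (y : β) (d : {r : List δ // 0 < r.length}) (w : d.1.length = 1) :
    (Levenshtein.impl C [] y d).1 = [d.1[0] + C.insert y] :=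
  match d, w with | ⟨[_], _⟩, _ => rfl

theorem Levenshtein.impl_cons (x : α) (xs : List α) (y : β) (a : δ)
    (s d : {r : List δ // 0 < r.length}) (h : d.1 = a :: s.1) :
    (Levenshtein.impl C (x :: xs) y d).1 =
      min (C.delete x + (Levenshtein.impl C xs y s).1[0]'(Levenshtein.impl C xs y s).2)
        (min (C.insert y + a) (C.substitute x y + s.1[0]'s.2)) ::
          (Levenshtein.impl C xs y s).1 :=
  match d, s, h with | ⟨_, _⟩, ⟨_ :: _, _⟩, rfl => rfl

theorem suffixLevenshtein_length (xs : List α) (ys : List β) :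
    (suffixLevenshtein C xs ys).1.length = xs.length + 1 := by
  induction ys with
  | nil =>
    induction xs with
    | nil => rfl
    | cons _ xs ih =>
      simp only [suffixLevenshtein, List.foldr_cons, List.foldr_nil, List.length_cons] at ih ⊢
      omega
  | cons y ys ih => exact Levenshtein.impl_length C xs y _ ih

theorem levenshtein_eq_getElem_zero (xs : List α) (ys : List β) :
    levenshtein C xs ys = (suffixLevenshtein C xs ys).1[0]'(suffixLevenshtein C xs ys).2 :=
  rfl

theorem suffixLevenshtein_cons₂ (xs : List α) (y : β) (ys : List β) :
    suffixLevenshtein C xs (y :: ys) = Levenshtein.impl C xs y (suffixLevenshtein C xs ys) :=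
  rfl

theorem suffixLevenshtein_cons₁ (x : α) (xs : List α) (ys : List β) :
    (suffixLevenshtein C (x :: xs) ys).1 =
      levenshtein C (x :: xs) ys :: (suffixLevenshtein C xs ys).1 := by
  induction ys with
  | nil => rfl
  | cons y ys ih =>
    obtain ⟨a, ha⟩ : ∃ a, (suffixLevenshtein C (x :: xs) (y :: ys)).1 =
        a :: (suffixLevenshtein C xs (y :: ys)).1 :=
      ⟨_, Levenshtein.impl_cons C x xs y _ _ _ ih⟩
    rw [ha]
    congr 1
    simp only [levenshtein_eq_getElem_zero, ha, List.getElem_cons_zero]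

theorem levenshtein_nil_cons (y : β) (ys : List β) :
    levenshtein C [] (y :: ys) = levenshtein C [] ys + C.insert y := by
  simp only [levenshtein_eq_getElem_zero, suffixLevenshtein_cons₂,
    Levenshtein.impl_nil C y _ (suffixLevenshtein_length C [] ys), List.getElem_cons_zero]

theorem levenshtein_cons_cons (x : α) (xs : List α) (y : β) (ys : List β) :
    levenshtein C (x :: xs) (y :: ys) =
      min (C.delete x + levenshtein C xs (y :: ys))
        (min (C.insert y + levenshtein C (x :: xs) ys)
          (C.substitute x y + levenshtein C xs ys)) := by
  simp only [levenshtein_eq_getElem_zero, suffixLevenshtein_cons₂,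
    Levenshtein.impl_cons C x xs y _ _ _ (suffixLevenshtein_cons₁ C x xs ys),
    List.getElem_cons_zero]

end Levenshtein

theorem length_le_length_add_levenshtein {α β : Type*} (C : Levenshtein.Cost α β ℕ)
    (hC : ∀ y, 1 ≤ C.insert y) (xs : List α) (ys : List β) :
    ys.length ≤ xs.length + levenshtein C xs ys := by
  induction xs generalizing ys with
  | nil =>
    induction ys with
    | nil => simp
    | cons y ys ih =>
      have hins := hC y
      simp only [levenshtein_nil_cons, List.length_cons, List.length_nil] at ih ⊢
      omega
  | cons x xs ihx =>
    induction ys with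
    | nil => simp
    | cons y ys ihy =>
      have hdel := ihx (y :: ys)
      have hsub := ihx ys
      have hins := hC y
      simp only [List.length_cons] at *
      rw [levenshtein_cons_cons, ← Nat.add_min_add_left, ← Nat.add_min_add_left, le_min_iff,
        le_min_iff]
      omega

theorem length_le_length_add_editDist (x y : List Bool) : y.length ≤ x.length + editDist x y :=
  length_le_length_add_levenshtein _ (fun _ => le_rfl) x y

theorem breakEdit_mono_edits (t : ℕ) {se te : ℕ} (h : se ≤ te) (w : List Bool) :
    BreakEdit t se w ⊆ BreakEdit t te w :=
  fun _ ⟨hcard, hne, l, hl, hed⟩ => ⟨hcard, hne, l, hl, hed.trans h⟩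

theorem breakEdit_split_fragment {k te : ℕ} {w u v : List Bool} {S : Multiset (List Bool)}
    (hu : u ≠ []) (hv : v ≠ []) (huv : u ++ v ∈ S) (hS : S ∈ BreakEdit k te w) :
    u ::ₘ v ::ₘ S.erase (u ++ v) ∈ BreakEdit (k + 1) te w := by
  obtain ⟨hcard, hne, l, rfl, hed⟩ := hS
  obtain ⟨l₁, l₂, rfl⟩ := List.append_of_mem (Multiset.mem_coe.mp huv)
  refine ⟨?_, ?_, l₁ ++ u :: v :: l₂, ?_, by simpa using hed⟩
  · rw [Multiset.card_cons, Multiset.card_cons, Multiset.card_erase_of_mem huv, hcard]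
    rfl
  · simp only [Multiset.mem_cons]
    rintro f (rfl | rfl | hf)
    exacts [hu, hv, hne f (Multiset.mem_of_mem_erase hf)]
  · have hmid (f : List Bool) (l : List (List Bool)) :
        (↑(l₁ ++ f :: l) : Multiset (List Bool)) = f ::ₘ ↑(l₁ ++ l) :=
      Multiset.coe_eq_coe.mpr List.perm_middle
    simp only [hmid, Multiset.erase_cons_head]

theorem exists_two_le_length_of_mem_breakEdit {k te : ℕ} {w : List Bool}
    {S : Multiset (List Bool)} (hS : S ∈ BreakEdit k te w) (hk : k + te + 1 < w.length) :
    ∃ f ∈ S, 2 ≤ f.length := by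
  obtain ⟨hcard, -, l, rfl, hed⟩ := hS
  by_contra! hshort
  have hflat : l.flatten.length ≤ l.length := by
    rw [List.length_flatten]
    simpa using List.sum_le_card_nsmul (l.map List.length) 1
      (by simpa using fun f hf => Nat.le_of_lt_succ (hshort f hf))
  have hlen := length_le_length_add_editDist l.flatten w
  simp only [Multiset.coe_card] at hcard
  omega

theorem exists_mem_breakEdit_succ {k te : ℕ} {c : List Bool} {S : Multiset (List Bool)}
    (hS : S ∈ BreakEdit k te c) (hk : k + te + 1 < c.length) :
    ∃ T, ∀ w, S ∈ BreakEdit k te w → T ∈ BreakEdit (k + 1) te w := by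
  obtain ⟨f, hfS, hf⟩ := exists_two_le_length_of_mem_breakEdit hS hk
  match f, hfS, hf with
  | b :: b' :: rest, hfS, _ =>
    exact ⟨_, fun _ hw => breakEdit_split_fragment (u := [b]) (v := b' :: rest)
      (List.cons_ne_nil _ _) (List.cons_ne_nil _ _) hfS hw⟩

theorem breakEdit_inter_nonempty_of_le {k t te : ℕ} {c c' : List Bool} (hkt : k ≤ t)
    (hn : t + te + 1 ≤ c.length) (h : (BreakEdit k te c ∩ BreakEdit k te c').Nonempty) :
    (BreakEdit t te c ∩ BreakEdit t te c').Nonempty := by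
  induction t, hkt using Nat.le_induction with
  | base => exact h
  | succ t _ ih =>
    obtain ⟨S, hS, hS'⟩ := ih (by omega)
    obtain ⟨T, hT⟩ := exists_mem_breakEdit_succ hS (by omega)
    exact ⟨T, hT c hS, hT c' hS'⟩

theorem breaks_edits_disjoint_mono_general (n t te s se : ℕ)
    (hst : s ≤ t) (hse : se ≤ te) (hn : t + te + 1 ≤ n)
    (c c' : List Bool) (hc : c.length = n)
    (hdisj : BreakEdit t te c ∩ BreakEdit t te c' = ∅) :
    BreakEdit s se c ∩ BreakEdit s se c' = ∅ := by
  rw [← Set.not_nonempty_iff_eq_empty] at hdisj ⊢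
  rintro ⟨S, hS, hS'⟩
  exact hdisj <| breakEdit_inter_nonempty_of_le hst (hc ▸ hn)
    ⟨S, breakEdit_mono_edits s hse c hS, breakEdit_mono_edits s hse c' hS'⟩

theorem breaks_edits_disjoint_mono (n t te s se : ℕ)
    (hst : s ≤ t) (hse : se ≤ te) (hn : t + te + 1 ≤ n)
    (c c' : List Bool) (hc : c.length = n) (hc' : c'.length = n)
    (hdisj : BreakEdit t te c ∩ BreakEdit t te c' = ∅) :
    BreakEdit s se c ∩ BreakEdit s se c' = ∅ :=
  breaks_edits_disjoint_mono_general n t te s se hst hse hn c c' hc hdisj
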